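/- arXiv:hep-th/0409011 — 10 statements merged into one kernel-verified Lean document; each statement's English description precedes it below -/
import Mathlib

section
/- For every natural number n and every integer s ≥ 1, the number of partitions of n in which no part appears more than s − 1 times equals the number of partitions of n in which no part is divisible by s. -/
open Finset Nat.Partition

theorem Nat.Partition.mem_countRestricted_iff_forall_count_le {n s : ℕ} (p : n.Partition) :
    p ∈ countRestricted n s ↔ ∀ i, p.parts.count i ≤ s - 1 := by
  simp only [countRestricted, mem_filter, mem_univ, true_and]
  refine ⟨fun h i => ?_, fun h i hi => ?_⟩
  · by_cases hi : i ∈ p.parts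
    · have := h i hi
      omega
    · simp [Multiset.count_eq_zero_of_notMem hi]
  · have := Multiset.count_pos.2 hi
    have := h i
    omega

/-- Glaisher's theorem: for `s ≥ 1`, the number of partitions of `n` in which no part
appears more than `s - 1` times equals the number of partitions of `n` in which no part
is divisible by `s`. -/
theorem glaisher (n s : ℕ) (hs : 1 ≤ s) :
    Nat.card {p : n.Partition // ∀ i, p.parts.count i ≤ s - 1} =
      Nat.card {p : n.Partition // ∀ i ∈ p.parts, ¬ s ∣ i} := by
  calc Nat.card {p : n.Partition // ∀ i, p.parts.count i ≤ s - 1}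
      = #(countRestricted n s) := by
        rw [← Nat.card_eq_finsetCard]
        exact Nat.card_congr <| Equiv.subtypeEquivRight fun p =>
          (mem_countRestricted_iff_forall_count_le p).symm
    _ = #(restricted n (¬ s ∣ ·)) := (card_restricted_eq_card_countRestricted n hs).symm
    _ = Nat.card {p : n.Partition // ∀ i ∈ p.parts, ¬ s ∣ i} := by
        rw [← Nat.card_eq_finsetCard]
        exact Nat.card_congr <| Equiv.subtypeEquivRight fun p => by simp [restricted]
end

section
/- For every natural number n, the number of partitions of n in which each part k appears at most k − 1 times (in particular the part 1 does not appear) equals the number of partitions of n in which no part is a perfect square. -/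
/-!
Both sides are compared through their generating functions. Allowing each part `k` at most
`k - 1` times gives `∏ₖ (1 + q^k + ⋯ + q^{k(k-1)}) = ∏ₖ (1 - q^{k²}) / (1 - q^k)`, while
forbidding square parts gives `∏_{k non-square} 1 / (1 - q^k)`, which is the same product
because the numerators `1 - q^{k²}` cancel exactly the square denominators. Formally, both
products become `∏ₖ (1 - q^{k²})` after multiplication by the nonzero series `∏ₖ (1 - q^k)`.
-/

open Finset PowerSeries PowerSeries.WithPiTopology

theorem Multiset.forall_count_le_sub_one_iff (s : Multiset ℕ) :
    (∀ k, s.count k ≤ k - 1) ↔ ∀ i ∈ s, s.count i < i := by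
  refine ⟨fun h i hi ↦ ?_, fun h k ↦ ?_⟩
  · have := h i
    have := Multiset.count_pos.2 hi
    omega
  · by_cases hk : k ∈ s
    · have := h k hk
      omega
    · simp [Multiset.count_eq_zero.2 hk]

theorem Nat.isSquare_iff_exists_pos_sq {i : ℕ} (hi : 0 < i) :
    IsSquare i ↔ ∃ m, 0 < m ∧ i = m ^ 2 := by
  constructor
  · rintro ⟨m, rfl⟩
    exact ⟨m, Nat.pos_of_mul_pos_left hi, (sq m).symm⟩
  · rintro ⟨m, -, rfl⟩
    exact ⟨m, sq m⟩

namespace Nat.Partition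

theorem hasProd_powerSeriesMk_card_count_lt (R : Type*) [CommSemiring R] [TopologicalSpace R]
    [T2Space R] (m : ℕ → ℕ) (hm : ∀ i, 0 < m (i + 1)) :
    HasProd (fun i ↦ ∑ j ∈ range (m (i + 1)), X ^ ((i + 1) * j))
      (PowerSeries.mk fun n ↦
        (#{p : n.Partition | ∀ i ∈ p.parts, p.parts.count i < m i} : R)) := by
  nontriviality R using Subsingleton.eq_one (α := R⟦X⟧)
  convert! hasProd_genFun (fun i c ↦ if c < m i then (1 : R) else 0) using 1
  · ext1 i
    rw [sum_range_eq_add_Ico _ (hm i), sum_Ico_eq_sum_range]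
    congrm $(by simp) + ?_
    trans ∑ j ∈ range (m (i + 1) - 1),
      (if j + 1 < m (i + 1) then (1 : R) else 0) • X ^ ((i + 1) * (j + 1))
    · refine sum_congr rfl fun j hj ↦ ?_
      rw [mem_range] at hj
      simp [add_comm 1 j, show j + 1 < m (i + 1) by omega]
    · refine (tsum_eq_sum fun j hj ↦ smul_eq_zero_of_left ?_ _).symm
      rw [mem_range] at hj
      exact if_neg (by omega)
  · simp_rw [genFun, card_filter, Finsupp.prod, prod_boole]
    simp

section Ring

variable (R : Type*) [CommRing R] [TopologicalSpace R] [IsTopologicalRing R] [T2Space R]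

theorem tprod_sum_range_mul_tprod_one_sub_X_pow :
    (∏' i, ∑ j ∈ range (i + 1), (X : R⟦X⟧) ^ ((i + 1) * j)) * ∏' i, (1 - X ^ (i + 1)) =
      ∏' i, (1 - X ^ ((i + 1) * (i + 1))) := by
  have hmul : Multipliable fun i ↦ ∑ j ∈ range (i + 1), (X : R⟦X⟧) ^ ((i + 1) * j) :=
    (hasProd_powerSeriesMk_card_count_lt R (fun i ↦ i) fun i ↦ i.succ_pos).multipliable
  rw [← hmul.tprod_mul (multipliable_one_sub_X_pow R)]
  exact tprod_congr fun i ↦ by simp_rw [pow_mul, geom_sum_mul_neg]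

theorem tprod_not_isSquare_mul_tprod_one_sub_X_pow :
    (∏' i, if ¬IsSquare (i + 1) then ∑' j, (X : R⟦X⟧) ^ ((i + 1) * j) else 1) *
        ∏' i, (1 - X ^ (i + 1)) =
      ∏' i, (1 - X ^ ((i + 1) * (i + 1))) := by
  rw [← (hasProd_powerSeriesMk_card_restricted R (¬IsSquare ·)).multipliable.tprod_mul
    (multipliable_one_sub_X_pow R)]
  have hfactor (i : ℕ) :
      (if ¬IsSquare (i + 1) then ∑' j, (X : R⟦X⟧) ^ ((i + 1) * j) else 1) * (1 - X ^ (i + 1)) =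
        if IsSquare (i + 1) then 1 - X ^ (i + 1) else 1 := by
    split_ifs
    · rw [one_mul]
    · simp_rw [pow_mul]
      exact tsum_pow_mul_one_sub_of_constantCoeff_eq_zero (by simp)
  simp_rw [hfactor]
  have hsq (i : ℕ) : (i + 1) * (i + 1) - 1 + 1 = (i + 1) * (i + 1) :=
    Nat.sub_add_cancel (Nat.mul_pos i.succ_pos i.succ_pos)
  have hinj : Function.Injective fun i ↦ (i + 1) * (i + 1) - 1 := fun a b h ↦ by
    have h' : (a + 1) * (a + 1) = (b + 1) * (b + 1) := by
      rw [← hsq a, ← hsq b]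
      exact congrArg (· + 1) h
    exact Nat.succ_injective (Nat.mul_self_inj.1 h')
  -- only the factors at the square indices `(i + 1) * (i + 1) - 1` differ from `1`
  rw [← hinj.tprod_eq (f := fun b ↦ if IsSquare (b + 1) then (1 : R⟦X⟧) - X ^ (b + 1) else 1)]
  · exact tprod_congr fun i ↦ by simp [hsq]
  · intro b hb
    obtain ⟨r, hr⟩ : IsSquare (b + 1) := not_not.1 fun h ↦ hb (if_neg h)
    rcases r with _ | r
    · simp at hr
    · exact ⟨r, by simp only; omega⟩

theorem powerSeriesMk_card_restricted_not_isSquare [NoZeroDivisors R] :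
    (PowerSeries.mk fun n ↦ (#(restricted n (¬IsSquare ·)) : R)) =
      PowerSeries.mk fun n ↦ (#{p : n.Partition | ∀ i ∈ p.parts, p.parts.count i < i} : R) := by
  nontriviality R
  rw [powerSeriesMk_card_restricted_eq_tprod R (¬IsSquare ·),
    (hasProd_powerSeriesMk_card_count_lt R (fun i ↦ i) fun i ↦ i.succ_pos).tprod_eq.symm]
  apply mul_right_cancel₀ (tprod_one_sub_X_pow_ne_zero R)
  rw [tprod_not_isSquare_mul_tprod_one_sub_X_pow, tprod_sum_range_mul_tprod_one_sub_X_pow]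

end Ring

theorem card_restricted_not_isSquare (n : ℕ) :
    #(restricted n (¬IsSquare ·)) = #{p : n.Partition | ∀ i ∈ p.parts, p.parts.count i < i} := by
  simpa using PowerSeries.ext_iff.mp (powerSeriesMk_card_restricted_not_isSquare ℤ) n

end Nat.Partition

/-- Andrews' theorem: the number of partitions of `n` in which each part `k` appears
at most `k - 1` times equals the number of partitions of `n` in which no part is a
perfect square. -/
theorem andrews_no_squares (n : ℕ) :
    Nat.card {p : n.Partition // ∀ k, p.parts.count k ≤ k - 1} =
      Nat.card {p : n.Partition // ∀ i ∈ p.parts, ¬ ∃ m : ℕ, 0 < m ∧ i = m ^ 2} := by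
  have hA (p : n.Partition) :
      (∀ k, p.parts.count k ≤ k - 1) ↔ ∀ i ∈ p.parts, p.parts.count i < i :=
    p.parts.forall_count_le_sub_one_iff
  have hB (p : n.Partition) :
      (∀ i ∈ p.parts, ¬ ∃ m : ℕ, 0 < m ∧ i = m ^ 2) ↔ ∀ i ∈ p.parts, ¬IsSquare i :=
    forall₂_congr fun i hi ↦ by rw [Nat.isSquare_iff_exists_pos_sq (p.parts_pos hi)]
  rw [Nat.card_congr (Equiv.subtypeEquivRight hA), Nat.card_congr (Equiv.subtypeEquivRight hB),
    Nat.card_eq_fintype_card, Nat.card_eq_fintype_card, Fintype.card_subtype,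
    Fintype.card_subtype]
  exact (Nat.Partition.card_restricted_not_isSquare n).symm
end

section
/- Let r ≥ 2 be a fixed integer. For every natural number n, the number of partitions of n in which each part k appears at most (r − 1)(k − 1) times equals the number of partitions of n in which no part is a 2r-gonal number, i.e. no part is of the form k·((r − 1)·k − (r − 2)) for some positive integer k. -/
/-!
Write `c k = (r - 1) * (k - 1)`. Allowing part `k` at most `c k` times contributes the factor
`1 + q^k + ⋯ + q^(k c k) = (1 - q^(k (c k + 1))) / (1 - q^k)` to the generating function, and
`k (c k + 1)` is the `k`-th `2r`-gonal number. Since `k ↦ k (c k + 1)` is injective, the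
numerators cancel exactly the factors `1 / (1 - q^j)` with `j` gonal, leaving the generating
function of partitions without gonal parts. In `ℤ⟦X⟧` this is an identity of infinite products
for the `X`-adic topology, proved after multiplying both sides by `∏ (1 - X^(i+1)) ≠ 0`.
-/

open Finset PowerSeries PowerSeries.WithPiTopology

namespace Nat.Partition

def countBounded (n : ℕ) (c : ℕ → ℕ) : Finset n.Partition :=
  univ.filter fun p ↦ ∀ i ∈ p.parts, p.parts.count i ≤ c i

theorem mem_countBounded {n : ℕ} {c : ℕ → ℕ} {p : n.Partition} :
    p ∈ countBounded n c ↔ ∀ i, p.parts.count i ≤ c i := by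
  simp only [countBounded, mem_filter, mem_univ, true_and]
  refine ⟨fun h i ↦ ?_, fun h i _ ↦ h i⟩
  by_cases hi : i ∈ p.parts
  · exact h i hi
  · simp [Multiset.count_eq_zero_of_notMem hi]

theorem hasProd_powerSeriesMk_card_countBounded (R : Type*) [CommSemiring R] [TopologicalSpace R]
    [T2Space R] (c : ℕ → ℕ) :
    HasProd (fun i ↦ ∑ j ∈ range (c (i + 1) + 1), X ^ ((i + 1) * j))
      (PowerSeries.mk fun n ↦ (#(countBounded n c) : R)) := by
  convert hasProd_genFun (fun i j ↦ if j ≤ c i then (1 : R) else 0) using 1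
  · ext1 i
    rw [sum_range_succ', add_comm, tsum_eq_sum (s := range (c (i + 1)))]
    · simp +contextual [sum_ite_of_true]
    · intro j hj
      simp_all
  · simp_rw [genFun, countBounded, card_filter, Finsupp.prod, prod_boole]
    simp

section
variable (R : Type*) [CommRing R] [TopologicalSpace R] [T2Space R] [IsTopologicalRing R]

theorem hasProd_powerSeriesMk_card_countBounded_mul (c : ℕ → ℕ) :
    HasProd (fun i ↦ 1 - X ^ ((i + 1) * (c (i + 1) + 1)))
      (PowerSeries.mk (fun n ↦ (#(countBounded n c) : R)) * ∏' i, (1 - X ^ (i + 1))) := by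
  have h := (hasProd_powerSeriesMk_card_countBounded R c).mul (multipliable_one_sub_X_pow R).hasProd
  convert! h using 1
  funext i
  simp_rw [pow_mul, geom_sum_mul_neg]

theorem hasProd_powerSeriesMk_card_restricted_mul (p : ℕ → Prop) [DecidablePred p] :
    HasProd (fun i ↦ if p (i + 1) then 1 else 1 - X ^ (i + 1))
      (PowerSeries.mk (fun n ↦ (#(restricted n p) : R)) * ∏' i, (1 - X ^ (i + 1))) := by
  have h := (hasProd_powerSeriesMk_card_restricted R p).mul (multipliable_one_sub_X_pow R).hasProd
  convert! h using 1
  funext i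
  split_ifs
  · simp_rw [pow_mul]
    exact (tsum_pow_mul_one_sub_of_constantCoeff_eq_zero (by simp)).symm
  · rw [one_mul]

end

open Classical in
theorem card_countBounded_eq_card_restricted (n : ℕ) (c : ℕ → ℕ)
    (hc : Set.InjOn (fun k ↦ k * (c k + 1)) (Set.Ioi 0)) :
    #(countBounded n c) = #(restricted n fun i ↦ ¬ ∃ k, 0 < k ∧ i = k * (c k + 1)) := by
  set p : ℕ → Prop := fun i ↦ ¬ ∃ k, 0 < k ∧ i = k * (c k + 1)
  set f : ℕ → ℤ⟦X⟧ := fun i ↦ if p (i + 1) then 1 else 1 - X ^ (i + 1)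
  -- `f i ≠ 1` exactly at the indices `i = e k`, and `f (e k)` is the `k`-th bounded-side factor.
  let e : ℕ → ℕ := fun k ↦ (k + 1) * (c (k + 1) + 1) - 1
  have he_succ (k : ℕ) : e k + 1 = (k + 1) * (c (k + 1) + 1) :=
    Nat.sub_add_cancel (Nat.one_le_iff_ne_zero.mpr (by positivity))
  have he : e.Injective := fun k l h ↦ by
    have := hc (Nat.succ_pos k) (Nat.succ_pos l) (by simpa [he_succ] using congr($h + 1))
    omega
  have hfe : f ∘ e = fun k ↦ 1 - X ^ ((k + 1) * (c (k + 1) + 1)) := by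
    funext k
    simp only [Function.comp_apply, f, he_succ, p]
    exact if_neg (not_not.mpr ⟨k + 1, k.succ_pos, rfl⟩)
  have hf : ∀ i ∉ Set.range e, f i = 1 := by
    intro i hi
    refine if_pos fun ⟨k, hk, hik⟩ ↦ hi ⟨k - 1, ?_⟩
    simp only [e, Nat.sub_add_cancel hk, ← hik, Nat.add_sub_cancel]
  have hprod := hasProd_powerSeriesMk_card_restricted_mul ℤ p
  rw [← he.hasProd_iff hf, hfe] at hprod
  have hgenFun := mul_right_cancel₀ (tprod_one_sub_X_pow_ne_zero ℤ)
    ((hasProd_powerSeriesMk_card_countBounded_mul ℤ c).unique hprod)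
  have := congr(coeff n $hgenFun)
  simp only [coeff_mk, Nat.cast_inj] at this
  exact this

end Nat.Partition

theorem strictMono_mul_succ_of_monotone {c : ℕ → ℕ} (hc : Monotone c) :
    StrictMono fun k ↦ k * (c k + 1) :=
  strictMono_nat_of_lt_succ fun k ↦
    Nat.mul_lt_mul_of_lt_of_le k.lt_succ_self (by grw [hc k.le_succ]) (Nat.succ_pos _)

theorem sub_eq_mul_pred_add_one {r k : ℕ} (hr : 2 ≤ r) (hk : 0 < k) :
    (r - 1) * k - (r - 2) = (r - 1) * (k - 1) + 1 := by
  obtain ⟨r, rfl⟩ : ∃ r', r = r' + 2 := ⟨r - 2, by omega⟩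
  obtain ⟨k, rfl⟩ : ∃ k', k = k' + 1 := ⟨k - 1, by omega⟩
  refine Nat.sub_eq_of_eq_add ?_
  rw [show r + 2 - 1 = r + 1 by omega, Nat.add_sub_cancel, Nat.add_sub_cancel]
  ring

/-- Sellers' generalization of Andrews' theorem: for fixed `r ≥ 2`, the number of
partitions of `n` in which each part `k` appears at most `(r - 1) * (k - 1)` times
equals the number of partitions of `n` in which no part is a `2r`-gonal number, i.e.
of the form `k * ((r - 1) * k - (r - 2))` for a positive integer `k`. -/
theorem sellers_even_gons (r : ℕ) (hr : 2 ≤ r) (n : ℕ) :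
    Nat.card {p : n.Partition // ∀ k, p.parts.count k ≤ (r - 1) * (k - 1)} =
      Nat.card {p : n.Partition //
        ∀ i ∈ p.parts, ¬ ∃ k : ℕ, 0 < k ∧ i = k * ((r - 1) * k - (r - 2))} := by
  classical
  have hc : Monotone fun k ↦ (r - 1) * (k - 1) := fun _ _ hab ↦
    Nat.mul_le_mul_left _ (Nat.sub_le_sub_right hab 1)
  have key := Nat.Partition.card_countBounded_eq_card_restricted n _
    (strictMono_mul_succ_of_monotone hc).injective.injOn
  simp only [Nat.card_eq_fintype_card, Fintype.card_subtype]
  convert key using 2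
  · ext p
    simp [Nat.Partition.mem_countBounded]
  · ext p
    simp +contextual [Nat.Partition.restricted, sub_eq_mul_pred_add_one hr]
end

section
/- Let r ≥ 2 be a fixed integer. For every natural number n, the number of partitions of n in which each odd part 2k − 1 (k ≥ 1) appears at most (2r − 1)(k − 1) times, with no restriction on the multiplicities of even parts, equals the number of partitions of n in which no part is an odd-indexed (2r+1)-gonal number, i.e. no part is of the form (2k − 1)·((2r − 1)·k − (2r − 2)) for some positive integer k. -/
/-!
Bounding the multiplicity of a part `i` by `b i` turns the factor `1 / (1 - q^i)` of the
partition generating function into `(1 - q^(i (b i + 1))) / (1 - q^i)`, while forbidding a part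
`m` removes the factor `1 / (1 - q^m)`, i.e. multiplies by `1 - q^m`. Hence, as long as
`i ↦ i (b i + 1)` is injective on the set of bounded parts, both kinds of partitions have the
generating function `∏_{i bounded} (1 - q^(i (b i + 1))) / ∏_i (1 - q^i)`. For the odd part
`i = 2k - 1` with bound `(2r - 1)(k - 1)`, the number `i (b i + 1)` is the `k`-th odd-indexed
`(2r + 1)`-gonal number, and these are strictly increasing in `k`.
-/

open Finset PowerSeries PowerSeries.WithPiTopology

namespace Nat.Partition

theorem hasProd_ite_one_sub_X_pow_image_iff {R : Type*} [CommRing R] [Nontrivial R]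
    [TopologicalSpace R] (s : Set ℕ) (g : ℕ → ℕ) (hinj : Set.InjOn g s)
    (hg : ∀ i ∈ s, g i = 0 ↔ i = 0) [DecidablePred (· ∈ s)] [DecidablePred (· ∈ g '' s)]
    {a : R⟦X⟧} :
    HasProd (fun i ↦ if i + 1 ∈ g '' s then 1 - X ^ (i + 1) else 1) a ↔
      HasProd (fun i ↦ if i + 1 ∈ s then 1 - X ^ g (i + 1) else 1) a := by
  have hsupp : ∀ i ∈ Function.mulSupport
      (fun i ↦ if i + 1 ∈ s then (1 : R⟦X⟧) - X ^ g (i + 1) else 1), i + 1 ∈ s := by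
    intro i hi
    by_contra h
    simp [h] at hi
  have hpos (i : ℕ) (hi : i + 1 ∈ s) : 0 < g (i + 1) :=
    Nat.pos_of_ne_zero fun h ↦ by simpa using (hg _ hi).1 h
  refine hasProd_iff_hasProd_of_ne_one_bij (fun i ↦ g (i.1 + 1) - 1) ?_ ?_ ?_
  · rintro ⟨i, hi⟩ ⟨j, hj⟩ hij
    have := hpos i (hsupp i hi)
    have := hpos j (hsupp j hj)
    have := hinj (hsupp i hi) (hsupp j hj)
    simp only [Subtype.mk.injEq] at hij ⊢
    omega
  · intro j hj
    obtain ⟨k, hk, hkj⟩ : j + 1 ∈ g '' s := by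
      by_contra h
      simp [h] at hj
    obtain ⟨i, rfl⟩ : ∃ i, k = i + 1 :=
      Nat.exists_eq_add_one.mpr (Nat.pos_of_ne_zero fun h ↦ by simp [(hg k hk).2 h] at hkj)
    refine ⟨⟨i, ?_⟩, by simp [hkj]⟩
    simpa [hk] using fun h ↦ (one_ne_zero : (1 : R) ≠ 0) <| by
      simpa using congrArg (coeff (g (i + 1))) h
  · rintro ⟨i, hi⟩
    simp [Nat.sub_add_cancel (hpos i (hsupp i hi)), hsupp i hi,
      Set.mem_image_of_mem g (hsupp i hi)]

section GenFun

variable (R : Type*) [CommRing R] [TopologicalSpace R] [IsTopologicalRing R] [T2Space R]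

theorem hasProd_powerSeriesMk_card_count_le (s : Set ℕ) [DecidablePred (· ∈ s)]
    (b : ℕ → ℕ) :
    HasProd (fun i ↦ if i + 1 ∈ s then ∑ j ∈ range (b (i + 1) + 1), X ^ ((i + 1) * j)
        else ∑' j : ℕ, X ^ ((i + 1) * j))
      (PowerSeries.mk fun n ↦
        (Nat.card {p : n.Partition // ∀ i ∈ s, p.parts.count i ≤ b i} : R)) := by
  convert! hasProd_genFun (fun i c ↦ if i ∈ s → c ≤ b i then (1 : R) else 0) using 1
  · ext1 i
    split_ifs with hi
    · rw [sum_range_succ', tsum_eq_sum (s := range (b (i + 1)))]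
      · simp only [hi, ite_smul, zero_smul, one_smul]
        rw [mul_zero, pow_zero, add_comm]
        exact congrArg _ (sum_congr rfl fun j hj ↦ by simp_all)
      · intro j hj
        simp only [mem_range, not_lt] at hj
        simp [hi, hj]
    · rw [tsum_eq_zero_add' ?_]
      · simp [hi]
      simp_rw [pow_mul, pow_add]
      exact .mul_right _ (summable_pow_of_constantCoeff_eq_zero (by simp))
  · classical
    ext n
    rw [coeff_mk, genFun, coeff_mk, Nat.card_eq_fintype_card, Fintype.card_subtype, card_filter]
    push_cast
    refine sum_congr rfl fun p _ ↦ ?_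
    simp_rw [Finsupp.prod, prod_boole]
    congr 1
    simp only [Multiset.toFinsupp_support, Multiset.toFinsupp_apply, Multiset.mem_toFinset]
    refine propext ⟨fun h i _ hi ↦ h i hi, fun h i hi ↦ ?_⟩
    by_cases hp : i ∈ p.parts
    · exact h i hp hi
    · simp [Multiset.count_eq_zero_of_notMem hp]

theorem hasProd_powerSeriesMk_card_count_le_mul (s : Set ℕ) [DecidablePred (· ∈ s)]
    (b : ℕ → ℕ) :
    HasProd (fun i ↦ if i + 1 ∈ s then 1 - X ^ ((i + 1) * (b (i + 1) + 1)) else 1)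
      (PowerSeries.mk (fun n ↦
        (Nat.card {p : n.Partition // ∀ i ∈ s, p.parts.count i ≤ b i} : R)) *
        ∏' i, (1 - X ^ (i + 1))) := by
  convert! (hasProd_powerSeriesMk_card_count_le R s b).mul
    (multipliable_one_sub_X_pow R).hasProd using 1
  ext1 i
  split_ifs
  · simp_rw [pow_mul]
    exact (geom_sum_mul_neg _ _).symm
  · simp_rw [pow_mul]
    exact (tsum_pow_mul_one_sub_of_constantCoeff_eq_zero (by simp)).symm

end GenFun

theorem card_count_le_eq_card_forall_notMem_image (n : ℕ) (s : Set ℕ) (b : ℕ → ℕ)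
    (hs : Set.InjOn (fun i ↦ i * (b i + 1)) s) :
    Nat.card {p : n.Partition // ∀ i ∈ s, p.parts.count i ≤ b i} =
      Nat.card {p : n.Partition // ∀ j ∈ p.parts, j ∉ (fun i ↦ i * (b i + 1)) '' s} := by
  classical
  set t := (fun i ↦ i * (b i + 1)) '' s
  have hA := hasProd_powerSeriesMk_card_count_le_mul ℤ s b
  -- Forbidding the parts in `t` is bounding their multiplicities by `0`.
  have hB := hasProd_powerSeriesMk_card_count_le_mul ℤ t 0
  simp only [Pi.zero_apply, zero_add, mul_one, nonpos_iff_eq_zero, Multiset.count_eq_zero] at hB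
  rw [hasProd_ite_one_sub_X_pow_image_iff s _ hs (fun i _ ↦ by simp)] at hB
  have hcoeff := congrArg (coeff n)
    (mul_right_cancel₀ (tprod_one_sub_X_pow_ne_zero ℤ) (hA.unique hB))
  rw [coeff_mk, coeff_mk, Nat.cast_inj] at hcoeff
  rw [hcoeff]
  exact Nat.card_congr <| Equiv.subtypeEquivRight fun p ↦
    ⟨fun h j hj hjt ↦ h j hjt hj, fun h j hjt hj ↦ h j hj hjt⟩

end Nat.Partition

theorem strictMono_mul_mul_half_add_one (c : ℕ) : StrictMono fun i ↦ i * (c * (i / 2) + 1) :=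
  fun _ _ hij ↦ Nat.mul_lt_mul_of_lt_of_le hij
    (Nat.add_le_add_right (Nat.mul_le_mul_left c (Nat.div_le_div_right hij.le)) 1) (Nat.succ_pos _)

theorem mul_sub_eq_mul_half_add_one {r k : ℕ} (hr : 1 ≤ r) (hk : 0 < k) :
    (2 * r - 1) * k - (2 * r - 2) = (2 * r - 1) * ((2 * k - 1) / 2) + 1 := by
  obtain ⟨t, rfl⟩ := Nat.exists_eq_add_one.mpr hk
  rw [show (2 * (t + 1) - 1) / 2 = t by omega, mul_add]
  omega

theorem image_odd_eq_setOf_oddIndexGonal {r : ℕ} (hr : 1 ≤ r) :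
    (fun i ↦ i * ((2 * r - 1) * (i / 2) + 1)) '' {i | Odd i} =
      {m | ∃ k : ℕ, 0 < k ∧ m = (2 * k - 1) * ((2 * r - 1) * k - (2 * r - 2))} := by
  ext m
  simp only [Set.mem_image, Set.mem_ofPred_eq]
  constructor
  · rintro ⟨_, ⟨t, rfl⟩, rfl⟩
    refine ⟨t + 1, t.succ_pos, ?_⟩
    rw [mul_sub_eq_mul_half_add_one hr t.succ_pos, show 2 * (t + 1) - 1 = 2 * t + 1 by omega]
  · rintro ⟨k, hk, rfl⟩
    exact ⟨2 * k - 1, ⟨k - 1, by omega⟩, by rw [mul_sub_eq_mul_half_add_one hr hk]⟩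

/-- Sellers' second generalization: for fixed `r ≥ 2`, the number of partitions of `n`
in which each odd part `2k - 1` (`k ≥ 1`) appears at most `(2r - 1) * (k - 1)` times
(even parts unrestricted) equals the number of partitions of `n` in which no part is an
odd-indexed `(2r+1)`-gonal number, i.e. of the form
`(2k - 1) * ((2r - 1) * k - (2r - 2))` for a positive integer `k`. -/
theorem sellers_odd_gons (r : ℕ) (hr : 2 ≤ r) (n : ℕ) :
    Nat.card {p : n.Partition //
        ∀ k : ℕ, 1 ≤ k → p.parts.count (2 * k - 1) ≤ (2 * r - 1) * (k - 1)} =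
      Nat.card {p : n.Partition //
        ∀ i ∈ p.parts, ¬ ∃ k : ℕ, 0 < k ∧ i = (2 * k - 1) * ((2 * r - 1) * k - (2 * r - 2))} := by
  have hodd (p : n.Partition) :
      (∀ k : ℕ, 1 ≤ k → p.parts.count (2 * k - 1) ≤ (2 * r - 1) * (k - 1)) ↔
        ∀ i ∈ {i | Odd i}, p.parts.count i ≤ (2 * r - 1) * (i / 2) := by
    refine ⟨?_, fun h k hk ↦ ?_⟩
    · rintro h _ ⟨t, rfl⟩
      simpa [show (2 * t + 1) / 2 = t by omega, show 2 * (t + 1) - 1 = 2 * t + 1 by omega]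
        using h (t + 1) t.succ_pos
    · simpa [show (2 * k - 1) / 2 = k - 1 by omega] using h (2 * k - 1) ⟨k - 1, by omega⟩
  rw [Nat.card_congr (Equiv.subtypeEquivRight hodd),
    Nat.Partition.card_count_le_eq_card_forall_notMem_image n _ _
      (strictMono_mul_mul_half_add_one _).injective.injOn,
    image_odd_eq_setOf_oddIndexGonal (by omega)]
  rfl
end

section
/- For every natural number n, the number of partitions of n into distinct parts none of which is divisible by 3 equals the number of partitions of n into parts congruent to 1 or 5 modulo 6. -/
/-!
If `P (2 * k) ↔ P k`, then `∏_{P k} (1 + X^k) = ∏_{P k} (1 - X^(2k)) / (1 - X^k)`, and the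
numerators `1 - X^(2k)` are exactly the factors `1 - X^m` with `m` even and `P m`; they cancel the
even denominators, leaving `∏_{P k, k odd} 1 / (1 - X^k)`. This is Euler's odd/distinct identity
restricted to `P`; Schur's case is `P k := ¬ 3 ∣ k`, the odd numbers prime to 3 being those
`≡ ±1 mod 6`. To stay inside `ℤ⟦X⟧`, both sides are compared after multiplication by
`∏_{P k} (1 - X^k)`, which has constant coefficient 1 and so can be cancelled.
-/

open Finset PowerSeries PowerSeries.WithPiTopology

namespace Nat.Partition

section GenFun

variable {R : Type*} [CommSemiring R] (P : ℕ → Prop) [DecidablePred P]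

theorem hasProd_genFun_distinct [TopologicalSpace R] [T2Space R] (a : R) :
    HasProd (fun i ↦ if P (i + 1) then 1 + a • X ^ (i + 1) else 1)
      (genFun fun i c ↦ if P i ∧ c = 1 then a else 0) := by
  convert hasProd_genFun (fun i c ↦ if P i ∧ c = 1 then a else 0) using 2 with i
  split_ifs with hi
  · rw [tsum_eq_single 0] <;> simp +contextual [hi]
  · simp [hi]

theorem genFun_distinct_one :
    genFun (fun i c ↦ if P i ∧ c = 1 then (1 : R) else 0) =
      PowerSeries.mk fun n ↦ (#{p : n.Partition | p.parts.Nodup ∧ ∀ i ∈ p.parts, P i} : R) := by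
  classical
  ext n
  simp_rw [coeff_genFun, coeff_mk, card_filter, Finsupp.prod, prod_boole,
    Multiset.nodup_iff_count_eq_one]
  simp [forall₂_and, and_comm]

end GenFun

theorem tprod_even_eq_tprod_ite_odd {M : Type*} [CommMonoid M] [TopologicalSpace M] (h : ℕ → M) :
    ∏' i, h (2 * (i + 1)) = ∏' i, if Odd (i + 1) then 1 else h (i + 1) := by
  have hinj : Function.Injective (fun i : ℕ ↦ 2 * i + 1) := fun a b hab ↦ by simpa using hab
  refine Eq.trans (tprod_congr fun i ↦ ?_) (hinj.tprod_eq fun m hm ↦ ?_)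
  · simp [parity_simps, mul_add_one]
  · obtain ⟨i, hi⟩ : Even (m + 1) := by
      by_contra hodd
      simp [Nat.not_even_iff_odd.1 hodd] at hm
    exact ⟨i - 1, by grind⟩

theorem constantCoeff_eq_one_of_hasProd {ι R : Type*} [CommSemiring R] [TopologicalSpace R]
    [T2Space R] {f : ι → R⟦X⟧} {g : R⟦X⟧} (hf : HasProd f g)
    (hf₁ : ∀ i, constantCoeff (f i) = 1) : constantCoeff g = 1 :=
  (hf.map constantCoeff (continuous_constantCoeff R)).unique <| by
    simp [Function.comp_def, hf₁]

theorem card_nodup_restricted_eq_card_restricted_odd (P : ℕ → Prop) [DecidablePred P]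
    (hP : ∀ k, P (2 * k) ↔ P k) (n : ℕ) :
    #{p : n.Partition | p.parts.Nodup ∧ ∀ i ∈ p.parts, P i} =
      #(restricted n fun i ↦ P i ∧ Odd i) := by
  set h : ℕ → ℤ⟦X⟧ := fun m ↦ if P m then 1 - X ^ m else 1
  have hD := genFun_distinct_one (R := ℤ) P ▸ hasProd_genFun_distinct P (1 : ℤ)
  have hO := hasProd_powerSeriesMk_card_restricted ℤ fun i ↦ P i ∧ Odd i
  have hG := hasProd_genFun_distinct P (-1 : ℤ)
  have hG₀ : genFun (fun i c ↦ if P i ∧ c = 1 then (-1 : ℤ) else 0) ≠ 0 := fun h0 ↦ by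
    simpa [h0] using constantCoeff_eq_one_of_hasProd hG fun i ↦ by split_ifs <;> simp
  have hDG (i : ℕ) : (if P (i + 1) then 1 + (1 : ℤ) • X ^ (i + 1) else 1) *
      (if P (i + 1) then 1 + (-1 : ℤ) • X ^ (i + 1) else 1) = h (2 * (i + 1)) := by
    simp only [h, hP]
    split_ifs <;> ring
  have hOG (i : ℕ) : (if P (i + 1) ∧ Odd (i + 1) then ∑' j, (X : ℤ⟦X⟧) ^ ((i + 1) * j) else 1) *
      (if P (i + 1) then 1 + (-1 : ℤ) • X ^ (i + 1) else 1) =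
        if Odd (i + 1) then 1 else h (i + 1) := by
    simp only [h]
    split_ifs <;> simp_all [pow_mul, ← sub_eq_add_neg, tsum_pow_mul_one_sub_of_constantCoeff_eq_zero]
  have key := calc
    _ = ∏' i, h (2 * (i + 1)) := (hD.mul hG).tprod_eq.symm.trans (tprod_congr hDG)
    _ = ∏' i, if Odd (i + 1) then 1 else h (i + 1) := tprod_even_eq_tprod_ite_odd h
    _ = _ := (tprod_congr hOG).symm.trans (hO.mul hG).tprod_eq
  simpa using congr(coeff n $(mul_right_cancel₀ hG₀ key))

end Nat.Partition

/-- Schur's theorem (first part): the number of partitions of `n` into distinct parts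
none of which is divisible by 3 equals the number of partitions of `n` into parts
congruent to 1 or 5 modulo 6. -/
theorem schur_mod_six (n : ℕ) :
    Nat.card {p : n.Partition // p.parts.Nodup ∧ ∀ i ∈ p.parts, ¬ 3 ∣ i} =
      Nat.card {p : n.Partition // ∀ i ∈ p.parts, i % 6 = 1 ∨ i % 6 = 5} := by
  rw [Nat.card_eq_fintype_card, Nat.card_eq_fintype_card, Fintype.card_subtype,
    Fintype.card_subtype, Nat.Partition.card_nodup_restricted_eq_card_restricted_odd (¬ 3 ∣ ·)
      (fun k ↦ by omega) n]
  refine congrArg card <| filter_congr fun p _ ↦ forall₂_congr fun i _ ↦ ?_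
  simp only [Nat.odd_iff]
  omega
end

section
/- For every natural number n, the number of partitions of n in which every odd part appears exactly once (odd parts are distinct, while even parts may appear with arbitrary multiplicity) equals the number of partitions of n into parts not congruent to 2 modulo 4. -/
/-!
Split every part `2m ≡ 2 (mod 4)` into two copies of the odd number `m`; the inverse merges
pairs of equal odd parts. In terms of multiplicities `c`, for odd `m` the pair `(c m, c (2m))`
becomes `(c m + 2 c (2m), 0)`, and when `c m ≤ 1` this is division with remainder by `2`, hence
invertible.
-/

namespace DistinctOddParts

open Multiset

def splitCount (c : ℕ → ℕ) (j : ℕ) : ℕ :=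
  if j % 2 = 1 then c j + 2 * c (2 * j) else if j % 4 = 2 then 0 else c j

def mergeCount (c : ℕ → ℕ) (j : ℕ) : ℕ :=
  if j % 2 = 1 then c j % 2 else if j % 4 = 2 then c (j / 2) / 2 else c j

theorem splitCount_mergeCount {c : ℕ → ℕ} (hc : ∀ j, j % 4 = 2 → c j = 0) :
    splitCount (mergeCount c) = c := by
  funext j
  have := hc j
  simp only [splitCount, mergeCount, Nat.mul_div_cancel_left j two_pos]
  split_ifs <;> omega

theorem mergeCount_splitCount {c : ℕ → ℕ} (hc : ∀ j, j % 2 = 1 → c j ≤ 1) :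
    mergeCount (splitCount c) = c := by
  funext j
  by_cases hodd : j % 2 = 1
  · have := hc j hodd
    simp only [mergeCount, splitCount, if_pos hodd]
    omega
  by_cases htwo : j % 4 = 2
  · have hhalf : j / 2 % 2 = 1 := by omega
    have hdouble : 2 * (j / 2) = j := by omega
    have := hc _ hhalf
    simp only [mergeCount, splitCount, if_neg hodd, if_pos htwo, if_pos hhalf, hdouble]
    omega
  · simp only [mergeCount, splitCount, if_neg hodd, if_neg htwo]

theorem splitCount_eq_zero_of_mod_four_eq_two (c : ℕ → ℕ) {j : ℕ} (hj : j % 4 = 2) :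
    splitCount c j = 0 := by
  simp only [splitCount]; split_ifs <;> omega

theorem mergeCount_le_one_of_odd (c : ℕ → ℕ) {j : ℕ} (hj : j % 2 = 1) :
    mergeCount c j ≤ 1 := by
  simp only [mergeCount, if_pos hj]; omega

def splitPart (i : ℕ) : Multiset ℕ := if i % 4 = 2 then replicate 2 (i / 2) else {i}

def splitParts (s : Multiset ℕ) : Multiset ℕ := s.bind splitPart

theorem sum_splitPart (i : ℕ) : (splitPart i).sum = i := by
  unfold splitPart; split_ifs <;> simp; omega

theorem sum_splitParts (s : Multiset ℕ) : (splitParts s).sum = s.sum := by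
  simp [splitParts, sum_bind, sum_splitPart]

theorem count_splitParts (s : Multiset ℕ) (j : ℕ) :
    (splitParts s).count j = splitCount s.count j := by
  induction s using Multiset.induction_on with
  | empty => simp [splitParts, splitCount]
  | cons a s ih =>
    rw [splitParts, cons_bind, count_add, ← splitParts, ih]
    simp only [splitCount, splitPart]
    split_ifs <;> simp only [count_cons, count_replicate, count_singleton] <;> split_ifs <;> omega

theorem mergeCount_count_eq_zero {s : Multiset ℕ} {j : ℕ}
    (hj : j ∉ s.toFinset ∪ s.toFinset.image (2 * ·)) :
    mergeCount s.count j = 0 := by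
  simp only [Finset.mem_union, Finset.mem_image, mem_toFinset, not_or, not_exists, not_and] at hj
  have hhalf : j % 4 = 2 → s.count (j / 2) = 0 :=
    fun htwo => count_eq_zero.2 fun hmem => hj.2 _ hmem (by omega)
  simp only [mergeCount, count_eq_zero.2 hj.1]
  split_ifs with hodd htwo
  · rfl
  · rw [hhalf htwo]
  · rfl

noncomputable def mergeParts (s : Multiset ℕ) : Multiset ℕ :=
  Finsupp.toMultiset <|
    Finsupp.onFinset (s.toFinset ∪ s.toFinset.image (2 * ·)) (mergeCount s.count)
      fun _ hj => by_contra fun hS => hj (mergeCount_count_eq_zero hS)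

theorem count_mergeParts (s : Multiset ℕ) (j : ℕ) :
    (mergeParts s).count j = mergeCount s.count j := by
  simp [mergeParts, Finsupp.count_toMultiset]

theorem splitParts_mergeParts {s : Multiset ℕ} (hs : ∀ j, j % 4 = 2 → s.count j = 0) :
    splitParts (mergeParts s) = s := by
  ext j
  rw [count_splitParts, funext (count_mergeParts s), splitCount_mergeCount hs]

theorem mergeParts_splitParts {s : Multiset ℕ} (hs : ∀ j, j % 2 = 1 → s.count j ≤ 1) :
    mergeParts (splitParts s) = s := by
  ext j
  rw [count_mergeParts, funext (count_splitParts s), mergeCount_splitCount hs]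

theorem sum_mergeParts {s : Multiset ℕ} (hs : ∀ j, j % 4 = 2 → s.count j = 0) :
    (mergeParts s).sum = s.sum := by
  rw [← sum_splitParts, splitParts_mergeParts hs]

theorem forall_odd_count_eq_one_iff (s : Multiset ℕ) :
    (∀ i ∈ s, Odd i → s.count i = 1) ↔ ∀ j, j % 2 = 1 → s.count j ≤ 1 := by
  refine ⟨fun h j hj => ?_, fun h i hi hodd => ?_⟩
  · by_cases hmem : j ∈ s
    · exact (h j hmem (Nat.odd_iff.2 hj)).le
    · simp [count_eq_zero.2 hmem]
  · have := count_pos.2 hi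
    have := h i (Nat.odd_iff.1 hodd)
    omega

theorem forall_mod_four_ne_two_iff (s : Multiset ℕ) :
    (∀ i ∈ s, i % 4 ≠ 2) ↔ ∀ j, j % 4 = 2 → s.count j = 0 := by
  simp only [count_eq_zero]
  exact ⟨fun h j hj hmem => h j hmem hj, fun h i hi htwo => h i htwo hi⟩

theorem pos_of_mem_of_count_zero {s : Multiset ℕ} (h : s.count 0 = 0) {i : ℕ} (hi : i ∈ s) :
    0 < i :=
  Nat.pos_of_ne_zero fun hi0 => count_eq_zero.1 h (hi0 ▸ hi)

theorem _root_.Nat.Partition.count_parts_zero {n : ℕ} (p : n.Partition) : p.parts.count 0 = 0 :=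
  count_eq_zero.2 fun h => (p.parts_pos h).false

def splitPartition {n : ℕ} (p : n.Partition) : n.Partition where
  parts := splitParts p.parts
  parts_pos := pos_of_mem_of_count_zero <| by
    rw [count_splitParts, splitCount, if_neg (by omega), if_neg (by omega), p.count_parts_zero]
  parts_sum := by rw [sum_splitParts, p.parts_sum]

noncomputable def mergePartition {n : ℕ} (p : n.Partition)
    (hp : ∀ j, j % 4 = 2 → p.parts.count j = 0) : n.Partition where
  parts := mergeParts p.parts
  parts_pos := pos_of_mem_of_count_zero <| by
    rw [count_mergeParts, mergeCount, if_neg (by omega), if_neg (by omega), p.count_parts_zero]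
  parts_sum := by rw [sum_mergeParts hp, p.parts_sum]

noncomputable def distinctOddEquivNotTwoModFour (n : ℕ) :
    {p : n.Partition // ∀ i ∈ p.parts, Odd i → p.parts.count i = 1} ≃
      {p : n.Partition // ∀ i ∈ p.parts, i % 4 ≠ 2} where
  toFun p := ⟨splitPartition p.1, (forall_mod_four_ne_two_iff _).2 fun j hj => by
    rw [splitPartition, count_splitParts]; exact splitCount_eq_zero_of_mod_four_eq_two _ hj⟩
  invFun q := ⟨mergePartition q.1 ((forall_mod_four_ne_two_iff _).1 q.2),
    (forall_odd_count_eq_one_iff _).2 fun j hj => by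
      rw [mergePartition, count_mergeParts]; exact mergeCount_le_one_of_odd _ hj⟩
  left_inv p := Subtype.ext <| Nat.Partition.ext <|
    mergeParts_splitParts ((forall_odd_count_eq_one_iff _).1 p.2)
  right_inv q := Subtype.ext <| Nat.Partition.ext <|
    splitParts_mergeParts ((forall_mod_four_ne_two_iff _).1 q.2)

end DistinctOddParts

/-- The number of partitions of `n` in which every odd part appears exactly once
(even parts unrestricted) equals the number of partitions of `n` into parts not
congruent to 2 modulo 4. -/
theorem distinct_odd_parts_eq_not_two_mod_four (n : ℕ) :
    Nat.card {p : n.Partition // ∀ i ∈ p.parts, Odd i → p.parts.count i = 1} =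
      Nat.card {p : n.Partition // ∀ i ∈ p.parts, i % 4 ≠ 2} :=
  Nat.card_congr (DistinctOddParts.distinctOddEquivNotTwoModFour n)
end

section
/- For every natural number n, the number of partitions of n in which every part not divisible by 3 appears exactly once (parts coprime to 3 are distinct, while parts divisible by 3 may appear with arbitrary multiplicity) equals the number of partitions of n into parts congruent to 0, 1, 3, or 5 modulo 6. -/
/-!
Both sides are coefficients of partition generating functions: the left one is
`∏_{3 ∣ k} (1 - X^k)⁻¹ * ∏_{3 ∤ k} (1 + X^k)` and the right one is
`∏_{k ≡ 0, 1, 3, 5 mod 6} (1 - X^k)⁻¹`. Multiplied by `∏_k (1 - X^k)`, they become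
`∏_{3 ∤ k} (1 - X^(2k))` and `∏_{k ≡ 2, 4 mod 6} (1 - X^k)`, which are the same product
reindexed by `k ↦ 2k`; since `∏_k (1 - X^k) ≠ 0`, the two generating functions agree.
-/

open PowerSeries PowerSeries.WithPiTopology

namespace Nat.Partition

theorem natCast_card_eq_coeff_genFun {R : Type*} [CommSemiring R] (Q : ℕ → ℕ → Prop)
    [∀ i c, Decidable (Q i c)] (n : ℕ) :
    (Nat.card {p : n.Partition // ∀ i ∈ p.parts, Q i (p.parts.count i)} : R) =
      coeff n (genFun fun i c ↦ if Q i c then (1 : R) else 0) := by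
  rw [coeff_genFun, Nat.card_eq_fintype_card, Fintype.card_subtype]
  simp_rw [Finsupp.prod, Finset.prod_boole]
  simp

section
variable {R : Type*} [CommRing R] [TopologicalSpace R] [IsTopologicalRing R] [T2Space R]

theorem hasProd_genFun_mul_one_sub_X_pow (f : ℕ → ℕ → R) :
    HasProd (fun i ↦ (1 + ∑' j, f (i + 1) (j + 1) • X ^ ((i + 1) * (j + 1))) * (1 - X ^ (i + 1)))
      (genFun f * ∏' i, (1 - X ^ (i + 1))) :=
  (hasProd_genFun f).mul (multipliable_one_sub_X_pow R).hasProd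

theorem one_add_tsum_X_pow_mul_one_sub_X_pow {k : ℕ} (hk : k ≠ 0) :
    (1 + ∑' j, X ^ (k * (j + 1))) * (1 - X ^ k) = (1 : R⟦X⟧) := by
  have hX : constantCoeff (X ^ k : R⟦X⟧) = 0 := by simp [hk]
  have hgeom := tsum_pow_mul_one_sub_of_constantCoeff_eq_zero hX
  rw [(summable_pow_of_constantCoeff_eq_zero hX).tsum_eq_zero_add, pow_zero] at hgeom
  simpa only [← pow_mul] using hgeom

theorem hasProd_genFun_distinct_outside_mul_one_sub_X_pow (P : ℕ → Prop) [DecidablePred P] :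
    HasProd (fun i ↦ if P (i + 1) then 1 else 1 - X ^ (2 * (i + 1)))
      (genFun (fun i c ↦ if ¬ P i → c = 1 then (1 : R) else 0) * ∏' i, (1 - X ^ (i + 1))) := by
  refine (hasProd_genFun_mul_one_sub_X_pow _).congr_fun fun i ↦ ?_
  split_ifs with hP
  · simp [hP, one_add_tsum_X_pow_mul_one_sub_X_pow]
  · simp only [hP, not_false_eq_true, forall_const, Nat.add_eq_right, ite_smul, one_smul,
      zero_smul, tsum_ite_eq, zero_add, mul_one]
    ring

theorem hasProd_genFun_restricted_mul_one_sub_X_pow (S : ℕ → Prop) [DecidablePred S] :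
    HasProd (fun i ↦ if S (i + 1) then 1 else 1 - X ^ (i + 1))
      (genFun (fun i _ ↦ if S i then (1 : R) else 0) * ∏' i, (1 - X ^ (i + 1))) := by
  refine (hasProd_genFun_mul_one_sub_X_pow _).congr_fun fun i ↦ ?_
  split_ifs
  · simp [one_add_tsum_X_pow_mul_one_sub_X_pow]
  · simp

end

theorem hasProd_ite_two_mul_iff {M : Type*} [CommMonoid M] [TopologicalSpace M] (P : ℕ → Prop)
    [DecidablePred P] (g : ℕ → M) (a : M) :
    HasProd (fun i ↦ if P (i + 1) then 1 else g (2 * (i + 1))) a ↔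
      HasProd (fun i ↦ if 2 ∣ i + 1 → P ((i + 1) / 2) then 1 else g (i + 1)) a := by
  have hinj : Function.Injective (fun i ↦ 2 * i + 1) := fun i j h ↦ by simpa using h
  refine Iff.trans ?_ (hinj.hasProd_iff ?_)
  · congr! 2 with i
    simp only [Function.comp_apply, show 2 * i + 1 + 1 = 2 * (i + 1) by ring]
    simp
  · rintro j hj
    rw [if_pos]
    rintro ⟨k, hk⟩
    exact absurd ⟨k - 1, by simp only; omega⟩ hj

end Nat.Partition

open Nat.Partition

/-- The number of partitions of `n` in which every part not divisible by 3 appears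
exactly once (parts divisible by 3 unrestricted) equals the number of partitions of
`n` into parts congruent to 0, 1, 3, or 5 modulo 6. -/
theorem distinct_coprime_three_parts_eq_mod_six (n : ℕ) :
    Nat.card {p : n.Partition // ∀ i ∈ p.parts, ¬ 3 ∣ i → p.parts.count i = 1} =
      Nat.card {p : n.Partition //
        ∀ i ∈ p.parts, i % 6 = 0 ∨ i % 6 = 1 ∨ i % 6 = 3 ∨ i % 6 = 5} := by
  set S : ℕ → Prop := fun i ↦ i % 6 = 0 ∨ i % 6 = 1 ∨ i % 6 = 3 ∨ i % 6 = 5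
  have hS : ∀ i, (2 ∣ i + 1 → 3 ∣ (i + 1) / 2) ↔ S (i + 1) := fun i ↦ by omega
  have hRight := (hasProd_genFun_restricted_mul_one_sub_X_pow (R := ℤ) S).congr_fun
    fun i ↦ if_congr (hS i) rfl rfl
  have hLeft := hasProd_genFun_distinct_outside_mul_one_sub_X_pow (R := ℤ) (3 ∣ ·)
  have key : genFun (fun i c ↦ if ¬ 3 ∣ i → c = 1 then (1 : ℤ) else 0) =
      genFun fun i _ ↦ if S i then 1 else 0 :=
    mul_right_cancel₀ (tprod_one_sub_X_pow_ne_zero ℤ)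
      (hLeft.unique ((hasProd_ite_two_mul_iff (3 ∣ ·) (1 - X ^ ·) _).2 hRight))
  exact_mod_cast (natCast_card_eq_coeff_genFun (R := ℤ) _ n).trans
    ((congrArg (coeff n) key).trans (natCast_card_eq_coeff_genFun _ n).symm)
end

section
/- For every natural number n, the number of pairs (λ, μ) where λ is a partition of some a into parts not divisible by 3, μ is a partition of some b into distinct parts not divisible by 3, and a + b = n, equals the number of partitions of 2n into parts not divisible by 3 in which every odd part occurs with even multiplicity (even parts unrestricted). -/
open Multiset

namespace PairsAux3

lemma two_mul_inj : Function.Injective (fun x : ℕ => 2 * x) := fun a b h => by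
  simpa using h

lemma count_map_two (mu : Multiset ℕ) (k : ℕ) :
    (mu.map (fun x => 2 * x)).count (2 * k) = mu.count k :=
  Multiset.count_map_eq_count' _ _ two_mul_inj _

lemma count_map_two_odd (mu : Multiset ℕ) {j : ℕ} (hj : Odd j) :
    (mu.map (fun x => 2 * x)).count j = 0 := by
  rw [Multiset.count_eq_zero]
  intro hm
  obtain ⟨k, -, rfl⟩ := Multiset.mem_map.mp hm
  have := Nat.odd_iff.mp hj
  omega

lemma sum_map_two (t : Multiset ℕ) : (t.map (fun x => 2 * x)).sum = 2 * t.sum := by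
  induction t using Multiset.induction with
  | empty => simp
  | cons a t ih => simp [Multiset.map_cons, ih]; ring

lemma count_half (s : Multiset ℕ) (j : ℕ) :
    (s.toFinset.val.bind fun i => Multiset.replicate (s.count i / 2) i).count j
      = s.count j / 2 := by
  rw [Multiset.count_bind]
  have h1 : (s.toFinset.val.map fun i => (Multiset.replicate (s.count i / 2) i).count j).sum
      = ∑ i ∈ s.toFinset, (Multiset.replicate (s.count i / 2) i).count j := rfl
  rw [h1]
  have h2 : ∀ i ∈ s.toFinset, (Multiset.replicate (s.count i / 2) i).count j
      = if i = j then s.count i / 2 else 0 := by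
    intro i _
    rw [Multiset.count_replicate]
  rw [Finset.sum_congr rfl h2, Finset.sum_ite_eq']
  by_cases h : j ∈ s.toFinset
  · simp [h]
  · have : s.count j = 0 := by
      rw [Multiset.count_eq_zero]
      intro hj
      exact h (Multiset.mem_toFinset.mpr hj)
    simp [h, this]

/-- The forward map: double the multiplicities of `λ` and double the values of `μ`. -/
def pairMap (n : ℕ) :
    {q : (a : ℕ) × (b : ℕ) × a.Partition × b.Partition //
        q.1 + q.2.1 = n ∧ (∀ i ∈ q.2.2.1.parts, ¬ 3 ∣ i) ∧
        q.2.2.2.parts.Nodup ∧ (∀ i ∈ q.2.2.2.parts, ¬ 3 ∣ i)} →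
    {p : (2 * n).Partition //
        (∀ i ∈ p.parts, ¬ 3 ∣ i) ∧ ∀ i ∈ p.parts, Odd i → Even (p.parts.count i)} :=
  fun q =>
    ⟨⟨q.1.2.2.1.parts + q.1.2.2.1.parts + q.1.2.2.2.parts.map (fun x => 2 * x),
      by
        intro i hi
        rcases Multiset.mem_add.mp hi with hi | hi
        · rcases Multiset.mem_add.mp hi with hi | hi
          · exact q.1.2.2.1.parts_pos hi
          · exact q.1.2.2.1.parts_pos hi
        · obtain ⟨k, hk, rfl⟩ := Multiset.mem_map.mp hi
          have := q.1.2.2.2.parts_pos hk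
          omega,
      by
        rw [Multiset.sum_add, Multiset.sum_add, sum_map_two,
          q.1.2.2.1.parts_sum, q.1.2.2.2.parts_sum]
        have := q.2.1
        omega⟩,
      by
        intro i hi
        rcases Multiset.mem_add.mp hi with hi | hi
        · rcases Multiset.mem_add.mp hi with hi | hi
          · exact q.2.2.1 i hi
          · exact q.2.2.1 i hi
        · obtain ⟨k, hk, rfl⟩ := Multiset.mem_map.mp hi
          have := q.2.2.2.2 k hk
          intro h3
          exact this (by omega),
      by
        intro i _ hodd
        rw [Multiset.count_add, Multiset.count_add, count_map_two_odd _ hodd]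
        exact ⟨q.1.2.2.1.parts.count i, by omega⟩⟩

lemma pairMap_injective (n : ℕ) : Function.Injective (pairMap n) := by
  rintro ⟨⟨a1, b1, lam1, mu1⟩, hab1, hl1, hnd1, hm1⟩ ⟨⟨a2, b2, lam2, mu2⟩, hab2, hl2, hnd2, hm2⟩ h
  have hparts : lam1.parts + lam1.parts + mu1.parts.map (fun x => 2 * x)
      = lam2.parts + lam2.parts + mu2.parts.map (fun x => 2 * x) :=
    congrArg (fun p => p.1.parts) h
  have hc : ∀ j : ℕ,
      lam1.parts.count j + lam1.parts.count j + (mu1.parts.map (fun x => 2 * x)).count j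
      = lam2.parts.count j + lam2.parts.count j + (mu2.parts.map (fun x => 2 * x)).count j := by
    intro j
    have := congrArg (Multiset.count j) hparts
    simpa [Multiset.count_add] using this
  have hlam : ∀ j : ℕ, lam1.parts.count j = lam2.parts.count j := by
    intro j
    rcases Nat.even_or_odd j with he | ho
    · obtain ⟨k, hk⟩ := he
      have hj : j = 2 * k := by omega
      subst hj
      have := hc (2 * k)
      rw [count_map_two, count_map_two] at this
      have c1 : mu1.parts.count k ≤ 1 := Multiset.nodup_iff_count_le_one.mp hnd1 k
      have c2 : mu2.parts.count k ≤ 1 := Multiset.nodup_iff_count_le_one.mp hnd2 k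
      omega
    · have := hc j
      rw [count_map_two_odd _ ho, count_map_two_odd _ ho] at this
      omega
  have hmu : ∀ k : ℕ, mu1.parts.count k = mu2.parts.count k := by
    intro k
    have := hc (2 * k)
    rw [count_map_two, count_map_two] at this
    have := hlam (2 * k)
    omega
  have hlameq : lam1.parts = lam2.parts := Multiset.ext.mpr hlam
  have hmueq : mu1.parts = mu2.parts := Multiset.ext.mpr hmu
  have ha : a1 = a2 := by rw [← lam1.parts_sum, ← lam2.parts_sum, hlameq]
  have hb : b1 = b2 := by rw [← mu1.parts_sum, ← mu2.parts_sum, hmueq]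
  subst ha; subst hb
  have e1 : lam1 = lam2 := Nat.Partition.ext hlameq
  have e2 : mu1 = mu2 := Nat.Partition.ext hmueq
  subst e1; subst e2; rfl

lemma pairMap_surjective (n : ℕ) : Function.Surjective (pairMap n) := by
  rintro ⟨p, hp3, hpodd⟩
  set s := p.parts with hs
  set lamParts : Multiset ℕ :=
    s.toFinset.val.bind fun i => Multiset.replicate (s.count i / 2) i with hlamdef
  set muParts' : Multiset ℕ := s.toFinset.val.filter (fun i => ¬ Even (s.count i))
    with hmu'def
  set muParts : Multiset ℕ := muParts'.map (fun i => i / 2) with hmudef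
  have hlamcount : ∀ j, lamParts.count j = s.count j / 2 := fun j => count_half s j
  have hmu'nodup : muParts'.Nodup := s.toFinset.nodup.filter _
  have hmem' : ∀ i, i ∈ muParts' ↔ i ∈ s ∧ ¬ Even (s.count i) := by
    intro i
    rw [hmu'def, Multiset.mem_filter, Finset.mem_val, Multiset.mem_toFinset]
  have hmu'even : ∀ i ∈ muParts', Even i := by
    intro i hi
    obtain ⟨his, hcnt⟩ := (hmem' i).mp hi
    by_contra hev
    exact hcnt (hpodd i his (Nat.not_even_iff_odd.mp hev))
  have hmap2 : muParts.map (fun x => 2 * x) = muParts' := by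
    rw [hmudef, Multiset.map_map]
    have : ∀ i ∈ muParts', ((fun x => 2 * x) ∘ fun i => i / 2) i = id i := by
      intro i hi
      obtain ⟨r, hr⟩ := hmu'even i hi
      simp only [Function.comp, id]
      omega
    rw [Multiset.map_congr rfl this, Multiset.map_id]
  have E : lamParts + lamParts + muParts.map (fun x => 2 * x) = s := by
    rw [hmap2]
    apply Multiset.ext.mpr
    intro j
    rw [Multiset.count_add, Multiset.count_add, hlamcount]
    by_cases hmem : j ∈ muParts'
    · have h1 : muParts'.count j = 1 := Multiset.count_eq_one_of_mem hmu'nodup hmem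
      have h2 : ¬ Even (s.count j) := ((hmem' j).mp hmem).2
      rw [Nat.even_iff] at h2
      omega
    · have h1 : muParts'.count j = 0 := Multiset.count_eq_zero_of_notMem hmem
      by_cases hjs : j ∈ s
      · have h2 : Even (s.count j) := by
          by_contra hev
          exact hmem ((hmem' j).mpr ⟨hjs, hev⟩)
        rw [Nat.even_iff] at h2
        omega
      · have : s.count j = 0 := Multiset.count_eq_zero_of_notMem hjs
        omega
  have hsums : 2 * lamParts.sum + 2 * muParts.sum = 2 * n := by
    have := congrArg Multiset.sum E
    rw [Multiset.sum_add, Multiset.sum_add, sum_map_two, hs, p.parts_sum] at this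
    omega
  have hlampos : ∀ {i : ℕ}, i ∈ lamParts → 0 < i := by
    intro i hi
    rw [hlamdef] at hi
    obtain ⟨i0, hi0, hirep⟩ := Multiset.mem_bind.mp hi
    have := Multiset.eq_of_mem_replicate hirep
    subst this
    exact p.parts_pos (Multiset.mem_toFinset.mp hi0)
  have hlammem : ∀ i ∈ lamParts, i ∈ s := by
    intro i hi
    rw [hlamdef] at hi
    obtain ⟨i0, hi0, hirep⟩ := Multiset.mem_bind.mp hi
    have := Multiset.eq_of_mem_replicate hirep
    subst this
    exact Multiset.mem_toFinset.mp hi0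
  have hmupos : ∀ {j : ℕ}, j ∈ muParts → 0 < j := by
    intro j hj
    rw [hmudef] at hj
    obtain ⟨i, hi, rfl⟩ := Multiset.mem_map.mp hj
    obtain ⟨r, hr⟩ := hmu'even i hi
    have : 0 < i := p.parts_pos ((hmem' i).mp hi).1
    omega
  refine ⟨⟨⟨lamParts.sum, muParts.sum,
    ⟨lamParts, hlampos, rfl⟩, ⟨muParts, hmupos, rfl⟩⟩, ?_, ?_, ?_, ?_⟩, ?_⟩
  · show lamParts.sum + muParts.sum = n
    omega
  · intro i hi
    exact hp3 i (hlammem i hi)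
  · apply Multiset.Nodup.map_on _ hmu'nodup
    intro i hi i' hi' heq
    obtain ⟨r, hr⟩ := hmu'even i hi
    obtain ⟨r', hr'⟩ := hmu'even i' hi'
    omega
  · intro j hj
    have hj' : j ∈ muParts := hj
    obtain ⟨i, hi, rfl⟩ := Multiset.mem_map.mp hj'
    obtain ⟨r, hr⟩ := hmu'even i hi
    have h3 : ¬ 3 ∣ i := hp3 i ((hmem' i).mp hi).1
    intro hdvd
    exact h3 (by omega)
  · apply Subtype.ext
    apply Nat.Partition.ext
    exact E

end PairsAux3

/-- The number of pairs `(λ, μ)` where `λ` is a partition of some `a` into parts not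
divisible by 3, `μ` is a partition of some `b` into distinct parts not divisible by 3,
and `a + b = n`, equals the number of partitions of `2n` into parts not divisible by 3
in which every odd part occurs with even multiplicity (even parts unrestricted). -/
theorem pairs_coprime_three_eq_even_multiplicity_odd_parts (n : ℕ) :
    Nat.card {q : (a : ℕ) × (b : ℕ) × a.Partition × b.Partition //
        q.1 + q.2.1 = n ∧ (∀ i ∈ q.2.2.1.parts, ¬ 3 ∣ i) ∧
        q.2.2.2.parts.Nodup ∧ (∀ i ∈ q.2.2.2.parts, ¬ 3 ∣ i)} =
      Nat.card {p : (2 * n).Partition //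
        (∀ i ∈ p.parts, ¬ 3 ∣ i) ∧ ∀ i ∈ p.parts, Odd i → Even (p.parts.count i)} := by
  exact Nat.card_eq_of_bijective (PairsAux3.pairMap n)
    ⟨PairsAux3.pairMap_injective n, PairsAux3.pairMap_surjective n⟩
end

section
/- For every real number x, cosh x equals the infinite product over k ≥ 0 of (1 + 4x² / ((2k+1)² π²)). -/
open Real

open Filter Topology Finset Complex in
private lemma sinh_prod_aux (y : ℝ) :
    Tendsto (fun n : ℕ => y * ∏ j ∈ Finset.range n, (1 + y ^ 2 / (((j : ℝ) + 1) ^ 2 * π ^ 2)))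
      atTop (𝓝 (Real.sinh y)) := by
  have hπ : (π : ℂ) ≠ 0 := by exact_mod_cast Real.pi_ne_zero
  have h := Complex.tendsto_euler_sin_prod ((y : ℂ) * Complex.I / (π : ℂ))
  have hz : (π : ℂ) * ((y : ℂ) * Complex.I / (π : ℂ)) = (y : ℂ) * Complex.I := by
    field_simp
  rw [hz, Complex.sin_mul_I] at h
  have hfac : ∀ j : ℕ, (1 : ℂ) - ((y : ℂ) * Complex.I / (π : ℂ)) ^ 2 / ((j : ℂ) + 1) ^ 2
      = (((1 + y ^ 2 / (((j : ℝ) + 1) ^ 2 * π ^ 2) : ℝ)) : ℂ) := by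
    intro j
    have hjr : ((j : ℝ) + 1) ≠ 0 := by positivity
    have hj : ((j : ℂ) + 1) ≠ 0 := by exact_mod_cast hjr
    have hπr : (π : ℝ) ≠ 0 := Real.pi_ne_zero
    rw [div_pow, mul_pow, Complex.I_sq]
    push_cast
    field_simp
    ring
  have hIc : ∀ a c : ℂ, (a * Complex.I * c) * -Complex.I = a * c := by
    intro a c
    rw [show (a * Complex.I * c) * -Complex.I = a * c * -(Complex.I * Complex.I) from by ring,
      Complex.I_mul_I, neg_neg, mul_one]
  have h2 : Tendsto (fun n : ℕ =>
      ((y * ∏ j ∈ Finset.range n, (1 + y ^ 2 / (((j : ℝ) + 1) ^ 2 * π ^ 2)) : ℝ) : ℂ))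
      atTop (𝓝 (Complex.sinh (y : ℂ))) := by
    have h' := h.mul_const (-Complex.I)
    have hlim : Complex.sinh (y : ℂ) * Complex.I * -Complex.I = Complex.sinh (y : ℂ) := by
      rw [mul_assoc, mul_neg, Complex.I_mul_I, neg_neg, mul_one]
    rw [hlim] at h'
    refine h'.congr fun n => ?_
    simp only [hfac]
    rw [← Complex.ofReal_prod, hIc, ← Complex.ofReal_mul]
  have := (Complex.continuous_re.tendsto _).comp h2
  simpa only [Function.comp_def, Complex.ofReal_re, Complex.sinh_ofReal_re] using this

private lemma prod_range_two_mul (f : ℕ → ℝ) (n : ℕ) :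
    ∏ j ∈ Finset.range (2 * n), f j
      = (∏ m ∈ Finset.range n, f (2 * m)) * ∏ m ∈ Finset.range n, f (2 * m + 1) := by
  induction n with
  | zero => simp
  | succ n ih =>
    have h : 2 * (n + 1) = (2 * n + 1) + 1 := by ring
    rw [h, Finset.prod_range_succ, Finset.prod_range_succ, ih,
      Finset.prod_range_succ, Finset.prod_range_succ]
    ring

set_option maxHeartbeats 1000000 in
open Filter Topology in
/-- Infinite product representation of the hyperbolic cosine:
`cosh x = ∏_{k ≥ 0} (1 + 4x² / ((2k+1)² π²))`. -/
theorem cosh_eq_tprod (x : ℝ) :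
    Real.cosh x = ∏' k : ℕ, (1 + 4 * x ^ 2 / ((2 * (k : ℝ) + 1) ^ 2 * π ^ 2)) := by
  by_cases hx : x = 0
  · subst hx; simp
  set f : ℕ → ℝ := fun k => 1 + 4 * x ^ 2 / ((2 * (k : ℝ) + 1) ^ 2 * π ^ 2) with hf
  have hf1 : ∀ k, 1 ≤ f k := by
    intro k
    have : 0 ≤ 4 * x ^ 2 / ((2 * (k : ℝ) + 1) ^ 2 * π ^ 2) := by positivity
    simp only [hf]; linarith
  set P : ℕ → ℝ := fun n => ∏ k ∈ Finset.range n, f k with hP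
  have h2x : (2 : ℝ) * x ≠ 0 := mul_ne_zero two_ne_zero hx
  have hA : Tendsto (fun n : ℕ =>
      ∏ j ∈ Finset.range n, (1 + 4 * x ^ 2 / (((j : ℝ) + 1) ^ 2 * π ^ 2)))
      atTop (𝓝 ((2 * x)⁻¹ * Real.sinh (2 * x))) := by
    refine ((sinh_prod_aux (2 * x)).const_mul (2 * x)⁻¹).congr fun n => ?_
    rw [← mul_assoc, inv_mul_cancel₀ h2x, one_mul]
    exact Finset.prod_congr rfl fun j _ => by ring
  have hB : Tendsto (fun n : ℕ =>
      ∏ j ∈ Finset.range n, (1 + x ^ 2 / (((j : ℝ) + 1) ^ 2 * π ^ 2)))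
      atTop (𝓝 (x⁻¹ * Real.sinh x)) := by
    refine ((sinh_prod_aux x).const_mul x⁻¹).congr fun n => ?_
    rw [← mul_assoc, inv_mul_cancel₀ hx, one_mul]
  have hBne : x⁻¹ * Real.sinh x ≠ 0 :=
    mul_ne_zero (inv_ne_zero hx) (Real.sinh_ne_zero.2 hx)
  have hkey : ∀ n, P n = (∏ j ∈ Finset.range (2 * n),
      (1 + 4 * x ^ 2 / (((j : ℝ) + 1) ^ 2 * π ^ 2))) /
      (∏ j ∈ Finset.range n, (1 + x ^ 2 / (((j : ℝ) + 1) ^ 2 * π ^ 2))) := by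
    intro n
    have hB'pos : (0:ℝ) < ∏ j ∈ Finset.range n, (1 + x ^ 2 / (((j : ℝ) + 1) ^ 2 * π ^ 2)) :=
      Finset.prod_pos fun i _ => by positivity
    rw [prod_range_two_mul (fun j => 1 + 4 * x ^ 2 / (((j : ℝ) + 1) ^ 2 * π ^ 2)) n]
    have h1 : ∀ m ∈ Finset.range n,
        (1 + 4 * x ^ 2 / ((((2 * m : ℕ) : ℝ) + 1) ^ 2 * π ^ 2)) = f m := by
      intro m _
      simp only [hf]
      push_cast
      ring_nf
    have h2 : ∀ m ∈ Finset.range n,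
        (1 + 4 * x ^ 2 / ((((2 * m + 1 : ℕ) : ℝ) + 1) ^ 2 * π ^ 2))
          = 1 + x ^ 2 / (((m : ℝ) + 1) ^ 2 * π ^ 2) := by
      intro m _
      push_cast
      congr 1
      rw [div_eq_div_iff (by positivity) (by positivity)]
      ring
    rw [Finset.prod_congr rfl h1, Finset.prod_congr rfl h2, mul_div_assoc,
      div_self (ne_of_gt hB'pos), mul_one]
  have hP2 : Tendsto P atTop (𝓝 (Real.cosh x)) := by
    have hcomp : Tendsto (fun n : ℕ => 2 * n) atTop atTop :=
      tendsto_id.const_mul_atTop' zero_lt_two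
    have hA2 := hA.comp hcomp
    have hdiv := hA2.div hB hBne
    have hval : (2 * x)⁻¹ * Real.sinh (2 * x) / (x⁻¹ * Real.sinh x) = Real.cosh x := by
      rw [Real.sinh_two_mul]
      have hs := Real.sinh_ne_zero.2 hx
      field_simp
    rw [hval] at hdiv
    exact hdiv.congr fun n => (hkey n).symm
  have hmono : Monotone P := by
    apply monotone_nat_of_le_succ
    intro n
    show ∏ k ∈ Finset.range n, f k ≤ ∏ k ∈ Finset.range (n + 1), f k
    rw [Finset.prod_range_succ]
    have h0 : (0:ℝ) ≤ ∏ k ∈ Finset.range n, f k :=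
      Finset.prod_nonneg fun i _ => le_trans zero_le_one (hf1 i)
    exact le_mul_of_one_le_right h0 (hf1 n)
  have hLUB : IsLUB (Set.range P) (Real.cosh x) := isLUB_of_tendsto_atTop hmono hP2
  have hLUB2 : IsLUB (Set.range fun s : Finset ℕ => ∏ i ∈ s, f i) (Real.cosh x) := by
    constructor
    · rintro _ ⟨s, rfl⟩
      obtain ⟨n, hn⟩ := s.exists_nat_subset_range
      have hone : (1:ℝ) ≤ ∏ i ∈ Finset.range n \ s, f i := by
        calc (1:ℝ) = ∏ _i ∈ Finset.range n \ s, (1:ℝ) := by simp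
          _ ≤ ∏ i ∈ Finset.range n \ s, f i :=
            Finset.prod_le_prod (by simp) fun i _ => hf1 i
      calc ∏ i ∈ s, f i ≤ ∏ i ∈ Finset.range n, f i := by
            rw [← Finset.prod_sdiff hn]
            exact le_mul_of_one_le_left
              (Finset.prod_nonneg fun i _ => le_trans zero_le_one (hf1 i)) hone
        _ ≤ Real.cosh x := hLUB.1 ⟨n, rfl⟩
    · intro b hb
      refine hLUB.2 ?_
      rintro _ ⟨n, rfl⟩
      exact hb ⟨Finset.range n, rfl⟩
  have hmono2 : Monotone (fun s : Finset ℕ => ∏ i ∈ s, f i) := by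
    intro s t hst
    have hone : (1:ℝ) ≤ ∏ i ∈ t \ s, f i := by
      calc (1:ℝ) = ∏ _i ∈ t \ s, (1:ℝ) := by simp
        _ ≤ ∏ i ∈ t \ s, f i := Finset.prod_le_prod (by simp) fun i _ => hf1 i
    calc ∏ i ∈ s, f i ≤ ∏ i ∈ t, f i := by
          rw [← Finset.prod_sdiff hst]
          exact le_mul_of_one_le_left
            (Finset.prod_nonneg fun i _ => le_trans zero_le_one (hf1 i)) hone
      _ = ∏ i ∈ t, f i := rfl
  have hhp : HasProd f (Real.cosh x) := tendsto_atTop_isLUB hmono2 hLUB2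
  exact hhp.tprod_eq.symm
end

section
/- For all natural numbers n ≥ 1 and N ≥ n, the coefficient of X^n in the polynomial ∏_{k=1}^{N} (1 − X^k) over ℤ equals the coefficient of X^n in the polynomial (1 + 2·∑_{j=1}^{N} (−1)^j X^{j²}) · ∏_{k=1}^{N} (1 + X^k) over ℤ. -/
/-!
Cauchy's q-binomial theorem at `q = X²` and the symmetric point `y = X^{2N}`, `z = -X` gives the
finite Gauss identity `∏_{i<N} (1 - X^{2i+1})² = ∑_{|j| ≤ N} (-1)^j X^{j²} [2N, N+j]_{X²}`.
Since `[m, k]_q (q; q)_k = ∏_{i<k} (1 - q^{m-i})`, each `[2N, N+j]_{X²} (X²; X²)_N` is `1` modulo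
`X^{2(N-|j|)+2}`, and the weight `X^{j²}` lifts this to `X^{N+1}`. So `(X; X²)_N² (X²; X²)_N` is the
theta sum modulo `X^{N+1}`. Finally `(X²; X²)_N = (X; X)_N ∏ (1 + X^k)` and Euler's
`∏_{k ≤ N} (1 + X^k) · (X; X²)_N = ∏_{N < k ≤ 2N} (1 - X^k) ≡ 1` turn this into the claim.
-/

open Polynomial Finset

variable {R : Type*}

theorem two_mul_choose_two_add_self (k : ℕ) : 2 * k.choose 2 + k = k ^ 2 := by
  induction k with
  | zero => rfl
  | succ k ih => rw [Nat.choose_succ_succ, Nat.choose_one_right]; nlinarith [ih]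

theorem sum_range_two_mul_add_one {M : Type*} [AddCommMonoid M] (f : ℕ → M) (n : ℕ) :
    ∑ k ∈ range (2 * n + 1), f k = f n + ∑ j ∈ Icc 1 n, (f (n - j) + f (n + j)) := by
  rw [← Ico_add_one_right_eq_Icc, sum_Ico_eq_sum_range, Nat.add_sub_cancel, sum_add_distrib,
    show 2 * n + 1 = n + (n + 1) by ring, sum_range_add, sum_range_succ', ← sum_range_reflect]
  simp only [Nat.sub_sub, add_zero, add_comm _ 1]
  abel

theorem dvd_prod_one_sub_sub_one [CommRing R] {ι : Type*} {s : Finset ι} {a : R} {f : ι → R}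
    (h : ∀ i ∈ s, a ∣ f i) : a ∣ ∏ i ∈ s, (1 - f i) - 1 := by
  simp_rw [← Ideal.mem_span_singleton, ← Ideal.Quotient.eq_zero_iff_mem] at h ⊢
  rw [map_sub, map_prod, map_one,
    prod_congr rfl fun i hi => by rw [map_sub, map_one, h i hi, sub_zero], prod_const_one, sub_self]

section qbinom

variable [CommSemiring R] (q : R)

/-- The Gaussian binomial coefficient `[m, k]_q`. -/
noncomputable def qbinom : ℕ → ℕ → R
  | _, 0 => 1
  | 0, _ + 1 => 0
  | m + 1, k + 1 => qbinom m k + q ^ (k + 1) * qbinom m (k + 1)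

@[simp] theorem qbinom_zero_right (m : ℕ) : qbinom q m 0 = 1 := by cases m <;> rfl

theorem qbinom_succ_succ (m k : ℕ) :
    qbinom q (m + 1) (k + 1) = qbinom q m k + q ^ (k + 1) * qbinom q m (k + 1) := rfl

theorem qbinom_eq_zero_of_lt {m k : ℕ} (h : m < k) : qbinom q m k = 0 := by
  induction m generalizing k with
  | zero => obtain ⟨k, rfl⟩ := Nat.exists_eq_add_one.mpr h; rfl
  | succ m ih =>
    obtain ⟨k, rfl⟩ := Nat.exists_eq_add_one.mpr (m.succ_pos.trans h)
    rw [qbinom_succ_succ, ih (by omega), ih (by omega), mul_zero, add_zero]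

/-- Cauchy's q-binomial theorem. -/
theorem prod_add_pow_mul_eq_sum_qbinom (m : ℕ) (y z : R) :
    ∏ i ∈ range m, (y + q ^ i * z) =
      ∑ k ∈ range (m + 1), q ^ k.choose 2 * qbinom q m k * z ^ k * y ^ (m - k) := by
  induction m generalizing z with
  | zero => simp
  | succ m ih =>
    have hy : ∑ k ∈ range (m + 2), q ^ k.choose 2 * (q ^ k * qbinom q m k) * z ^ k * y ^ (m + 1 - k)
        = y * ∑ k ∈ range (m + 1), q ^ k.choose 2 * qbinom q m k * (q * z) ^ k * y ^ (m - k) := by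
      rw [sum_range_succ, qbinom_eq_zero_of_lt q (by omega : m < m + 1), mul_zero, mul_zero,
        zero_mul, zero_mul, add_zero, mul_sum]
      refine sum_congr rfl fun k hk => ?_
      rw [Nat.sub_add_comm (by simpa [Nat.lt_succ_iff] using hk)]
      ring
    have hz : ∑ k ∈ range (m + 1), q ^ (k + 1).choose 2 * qbinom q m k * z ^ (k + 1) *
          y ^ (m + 1 - (k + 1))
        = z * ∑ k ∈ range (m + 1), q ^ k.choose 2 * qbinom q m k * (q * z) ^ k * y ^ (m - k) := by
      rw [mul_sum]
      refine sum_congr rfl fun k _ => ?_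
      rw [Nat.choose_succ_succ, Nat.choose_one_right, Nat.add_sub_add_right]
      ring
    have hshift : ∑ k ∈ range (m + 1), q ^ (k + 1).choose 2 * (q ^ (k + 1) * qbinom q m (k + 1)) *
          z ^ (k + 1) * y ^ (m + 1 - (k + 1)) +
          q ^ Nat.choose 0 2 * qbinom q (m + 1) 0 * z ^ 0 * y ^ (m + 1 - 0)
        = ∑ k ∈ range (m + 2),
            q ^ k.choose 2 * (q ^ k * qbinom q m k) * z ^ k * y ^ (m + 1 - k) := by
      rw [sum_range_succ' _ (m + 1)]
      simp
    have hq : ∀ i, y + q ^ (i + 1) * z = y + q ^ i * (q * z) := fun i => by ring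
    rw [prod_range_succ', pow_zero, one_mul]
    simp_rw [hq]
    rw [ih, sum_range_succ' _ (m + 1)]
    simp_rw [qbinom_succ_succ, mul_add, add_mul]
    rw [sum_add_distrib, add_assoc, hshift, hy, hz]
    ring

end qbinom

section qPochhammer

variable [CommRing R] (q : R)

/-- `qPochhammer q n` is `(q; q)_n`. -/
noncomputable def qPochhammer (n : ℕ) : R := ∏ k ∈ Icc 1 n, (1 - q ^ k)

theorem qPochhammer_succ (n : ℕ) : qPochhammer q (n + 1) = qPochhammer q n * (1 - q ^ (n + 1)) :=
  prod_Icc_succ_top (by omega) _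

theorem qPochhammer_eq_mul_prod_Ioc {m n : ℕ} (h : m ≤ n) :
    qPochhammer q n = qPochhammer q m * ∏ k ∈ Ioc m n, (1 - q ^ k) := by
  have hIcc (n : ℕ) : Icc 1 n = Ioc 0 n := Icc_add_one_left_eq_Ioc 0 n
  rw [qPochhammer, qPochhammer, hIcc, hIcc, prod_Ioc_consecutive _ (Nat.zero_le m) h]

theorem pow_succ_dvd_qPochhammer_sub (m n : ℕ) :
    q ^ (min m n + 1) ∣ qPochhammer q n - qPochhammer q m := by
  have key {m n : ℕ} (h : m ≤ n) : q ^ (m + 1) ∣ qPochhammer q n - qPochhammer q m := by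
    rw [qPochhammer_eq_mul_prod_Ioc q h, ← mul_sub_one]
    exact dvd_mul_of_dvd_right (dvd_prod_one_sub_sub_one fun k hk =>
      pow_dvd_pow q (by simp at hk; omega)) _
  rcases le_total m n with h | h
  · rw [min_eq_left h]; exact key h
  · rw [min_eq_right h, ← dvd_neg, neg_sub]; exact key h

theorem qbinom_mul_qPochhammer (m k : ℕ) :
    qbinom q m k * qPochhammer q k = ∏ i ∈ range k, (1 - q ^ (m - i)) := by
  induction m generalizing k with
  | zero =>
    cases k with
    | zero => simp [qbinom, qPochhammer]
    | succ k => simp [qbinom]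
  | succ m ih =>
    cases k with
    | zero => simp [qPochhammer]
    | succ k =>
      rw [qbinom_succ_succ, qPochhammer_succ, prod_range_succ', Nat.sub_zero]
      simp only [Nat.add_sub_add_right]
      rcases le_or_gt k m with hkm | hmk
      · have h := ih (k + 1)
        rw [qPochhammer_succ, prod_range_succ] at h
        have he : q ^ (k + 1) * q ^ (m - k) = q ^ (m + 1) := by
          rw [← pow_add, show k + 1 + (m - k) = m + 1 by omega]
        linear_combination (1 - q ^ (k + 1)) * ih k + q ^ (k + 1) * h -
          (∏ i ∈ range k, (1 - q ^ (m - i))) * he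
      · rw [qbinom_eq_zero_of_lt q hmk, qbinom_eq_zero_of_lt q (by omega),
          prod_eq_zero (mem_range.mpr hmk) (by simp)]
        ring

theorem pow_succ_dvd_qbinom_mul_qPochhammer_sub_one {m k n t : ℕ} (hn : t ≤ n) (hk : t ≤ k)
    (hm : k + t ≤ m) : q ^ (t + 1) ∣ qbinom q m k * qPochhammer q n - 1 := by
  have hPoch : q ^ (t + 1) ∣ qPochhammer q n - qPochhammer q k :=
    (pow_dvd_pow q (by omega)).trans (pow_succ_dvd_qPochhammer_sub q k n)
  have hbinom : q ^ (t + 1) ∣ qbinom q m k * qPochhammer q k - 1 := by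
    rw [qbinom_mul_qPochhammer]
    exact dvd_prod_one_sub_sub_one fun i hi => pow_dvd_pow q (by simp at hi; omega)
  rw [show qbinom q m k * qPochhammer q n - 1 = qbinom q m k * (qPochhammer q n - qPochhammer q k) +
    (qbinom q m k * qPochhammer q k - 1) by ring]
  exact dvd_add (hPoch.mul_left _) hbinom

theorem qPochhammer_mul_prod_one_add_pow (n : ℕ) :
    qPochhammer q n * ∏ k ∈ Icc 1 n, (1 + q ^ k) = qPochhammer (q ^ 2) n := by
  rw [qPochhammer, qPochhammer, ← prod_mul_distrib]
  exact prod_congr rfl fun k _ => by ring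

theorem qPochhammer_sq_mul_prod_one_sub_pow_odd (n : ℕ) :
    qPochhammer (q ^ 2) n * ∏ i ∈ range n, (1 - q ^ (2 * i + 1)) = qPochhammer q (2 * n) := by
  induction n with
  | zero => simp [qPochhammer]
  | succ n ih =>
    rw [qPochhammer_succ, prod_range_succ, show 2 * (n + 1) = 2 * n + 1 + 1 by ring,
      qPochhammer_succ, qPochhammer_succ, ← ih]
    ring

end qPochhammer

section Polynomial

variable [CommRing R]

theorem prod_X_pow_sub_X_pow_odd (N : ℕ) :
    ∏ i ∈ range (2 * N), (X ^ (2 * N) - X ^ (2 * i + 1) : R[X]) =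
      (-1) ^ N * X ^ (3 * N ^ 2) * (∏ i ∈ range N, (1 - X ^ (2 * i + 1))) ^ 2 := by
  have hneg : ∏ i ∈ range N, (-X ^ (2 * i + 1) : R[X]) = (-1) ^ N * X ^ (N ^ 2) := by
    induction N with
    | zero => simp
    | succ N ih => rw [prod_range_succ, ih]; ring
  have hlow : ∏ i ∈ range N, (X ^ (2 * N) - X ^ (2 * i + 1) : R[X]) =
      (-1) ^ N * X ^ (N ^ 2) * ∏ i ∈ range N, (1 - X ^ (2 * i + 1)) := by
    rw [← hneg, ← prod_range_reflect (fun i => 1 - X ^ (2 * i + 1)), ← prod_mul_distrib]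
    refine prod_congr rfl fun i hi => ?_
    rw [show 2 * N = 2 * i + 1 + (2 * (N - 1 - i) + 1) by simp at hi; omega, pow_add]
    ring
  have hhigh : ∏ i ∈ range N, (X ^ (2 * N) - X ^ (2 * (N + i) + 1) : R[X]) =
      X ^ (2 * N * N) * ∏ i ∈ range N, (1 - X ^ (2 * i + 1)) := by
    rw [show (X : R[X]) ^ (2 * N * N) = ∏ i ∈ range N, X ^ (2 * N) by
      rw [prod_const, card_range, pow_mul], ← prod_mul_distrib]
    exact prod_congr rfl fun i _ => by ring
  rw [two_mul N, prod_range_add, ← two_mul, hlow, hhigh]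
  ring

theorem qPochhammer_X_ne_zero [Nontrivial R] (n : ℕ) : qPochhammer (X : R[X]) n ≠ 0 := by
  have h : eval 0 (qPochhammer (X : R[X]) n) = 1 := by
    rw [qPochhammer, eval_prod]
    exact prod_eq_one fun k hk => by simp [zero_pow (by simp at hk; omega : k ≠ 0)]
  exact fun h0 => one_ne_zero (h.symm.trans (by rw [h0, eval_zero]))

variable [IsDomain R]

theorem sq_prod_one_sub_X_pow_odd (N : ℕ) :
    (∏ i ∈ range N, (1 - X ^ (2 * i + 1) : R[X])) ^ 2 =
      qbinom (X ^ 2) (2 * N) N + ∑ j ∈ Icc 1 N, (-1) ^ j * X ^ (j ^ 2) *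
        (qbinom (X ^ 2) (2 * N) (N - j) + qbinom (X ^ 2) (2 * N) (N + j)) := by
  -- Both sides of Cauchy's theorem at this point carry the factor `c`.
  set c : R[X] := (-1) ^ N * X ^ (3 * N ^ 2)
  have hc : c ≠ 0 :=
    mul_ne_zero (pow_ne_zero _ (neg_ne_zero.2 one_ne_zero)) (pow_ne_zero _ X_ne_zero)
  have hcauchy := prod_add_pow_mul_eq_sum_qbinom (X ^ 2 : R[X]) (2 * N) (X ^ (2 * N)) (-X)
  have hfactor (i : ℕ) :
      (X ^ (2 * N) - X ^ (2 * i + 1) : R[X]) = X ^ (2 * N) + (X ^ 2) ^ i * -X := by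
    ring
  have hterm (k : ℕ) (b : R[X]) :
      (X ^ 2) ^ k.choose 2 * b * (-X) ^ k * (X ^ (2 * N)) ^ (2 * N - k) =
        (-1) ^ k * X ^ (k ^ 2 + 2 * N * (2 * N - k)) * b := by
    rw [← two_mul_choose_two_add_self, neg_pow, ← pow_mul, ← pow_mul, pow_add, pow_add]
    ring
  have hsign (j : ℕ) (hj : j ≤ N) : (-1 : R[X]) ^ (N - j) = (-1) ^ N * (-1) ^ j := by
    obtain ⟨d, rfl⟩ := Nat.exists_eq_add_of_le' hj
    rw [Nat.add_sub_cancel, pow_add, mul_assoc, ← mul_pow, neg_one_mul, neg_neg, one_pow, mul_one]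
  have hexp_sub (j : ℕ) (hj : j ≤ N) :
      (N - j) ^ 2 + 2 * N * (2 * N - (N - j)) = 3 * N ^ 2 + j ^ 2 := by
    zify [hj, show N - j ≤ 2 * N by omega]; ring
  have hexp_add (j : ℕ) (hj : j ≤ N) :
      (N + j) ^ 2 + 2 * N * (2 * N - (N + j)) = 3 * N ^ 2 + j ^ 2 := by
    zify [show N + j ≤ 2 * N by omega]; ring
  simp_rw [hterm] at hcauchy
  rw [sum_range_two_mul_add_one] at hcauchy
  apply mul_left_cancel₀ hc
  rw [← prod_X_pow_sub_X_pow_odd]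
  simp_rw [hfactor]
  rw [hcauchy, mul_add, mul_sum]
  congr 1
  · rw [show 2 * N - N = N by omega]
    ring
  · refine sum_congr rfl fun j hj => ?_
    have hj : j ≤ N := (mem_Icc.1 hj).2
    rw [hexp_sub j hj, hexp_add j hj, hsign j hj, pow_add, pow_add]
    ring

/-- `∑_{|j| ≤ N} (-1)^j X^{j²}`. -/
noncomputable def thetaSum (N : ℕ) : R[X] := 1 + 2 * ∑ j ∈ Icc 1 N, (-1) ^ j * X ^ (j ^ 2)

theorem X_pow_succ_dvd_sq_prod_mul_qPochhammer_sub_thetaSum (N : ℕ) :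
    (X : R[X]) ^ (N + 1) ∣
      (∏ i ∈ range N, (1 - X ^ (2 * i + 1))) ^ 2 * qPochhammer (X ^ 2) N - thetaSum N := by
  have hterm (j : ℕ) (hj : j ≤ N) (k : ℕ) (hk : N - j ≤ k) (hk' : k + (N - j) ≤ 2 * N) :
      (X : R[X]) ^ (N + 1) ∣
        X ^ (j ^ 2) * (qbinom (X ^ 2) (2 * N) k * qPochhammer (X ^ 2) N - 1) := by
    have h := pow_succ_dvd_qbinom_mul_qPochhammer_sub_one (X ^ 2 : R[X]) (Nat.sub_le N j) hk hk'
    rw [← pow_mul] at h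
    have hexp : N + 1 ≤ j ^ 2 + 2 * (N - j + 1) := by
      have := Nat.le_self_pow two_ne_zero j
      omega
    calc (X : R[X]) ^ (N + 1) ∣ X ^ (j ^ 2 + 2 * (N - j + 1)) := pow_dvd_pow X hexp
      _ = X ^ (j ^ 2) * X ^ (2 * (N - j + 1)) := pow_add _ _ _
      _ ∣ _ := mul_dvd_mul_left _ h
  set P : R[X] := qPochhammer (X ^ 2) N
  set b : ℕ → R[X] := qbinom (X ^ 2) (2 * N)
  rw [sq_prod_one_sub_X_pow_odd, thetaSum, add_mul, sum_mul, mul_sum,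
    show ∀ a c d : R[X], a + c - (1 + d) = (a - 1) + (c - d) by intros; ring, ← sum_sub_distrib]
  refine dvd_add (by simpa using hterm 0 (Nat.zero_le N) N le_rfl (by omega))
    (dvd_sum fun j hj => ?_)
  have hj := (mem_Icc.1 hj).2
  rw [show (-1) ^ j * X ^ (j ^ 2) * (b (N - j) + b (N + j)) * P - 2 * ((-1) ^ j * X ^ (j ^ 2)) =
    (-1) ^ j * (X ^ (j ^ 2) * (b (N - j) * P - 1) + X ^ (j ^ 2) * (b (N + j) * P - 1)) by ring]
  exact (dvd_add (hterm j hj (N - j) le_rfl (by omega))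
    (hterm j hj (N + j) (by omega) (by omega))).mul_left _

theorem X_pow_succ_dvd_thetaSum_mul_sub_qPochhammer (N : ℕ) :
    (X : R[X]) ^ (N + 1) ∣ thetaSum N * ∏ k ∈ Icc 1 N, (1 + X ^ k) - qPochhammer X N := by
  set V : R[X] := ∏ i ∈ range N, (1 - X ^ (2 * i + 1))
  set B : R[X] := ∏ k ∈ Icc 1 N, (1 + X ^ k)
  set W : R[X] := ∏ k ∈ Ioc N (2 * N), (1 - X ^ k)
  have hW : (X : R[X]) ^ (N + 1) ∣ W - 1 :=
    dvd_prod_one_sub_sub_one fun k hk => pow_dvd_pow X (by simp at hk; omega)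
  have hsplit : qPochhammer X (2 * N) = qPochhammer X N * W :=
    qPochhammer_eq_mul_prod_Ioc X (by omega)
  have hEuler : B * V = W := by
    refine mul_left_cancel₀ (qPochhammer_X_ne_zero N) ?_
    rw [← hsplit, ← qPochhammer_sq_mul_prod_one_sub_pow_odd, ← qPochhammer_mul_prod_one_add_pow]
    ring
  have hprod : V ^ 2 * qPochhammer (X ^ 2) N * B = qPochhammer X N * W ^ 2 := by
    calc V ^ 2 * qPochhammer (X ^ 2) N * B = (B * V) * (qPochhammer (X ^ 2) N * V) := by ring
      _ = qPochhammer X N * W ^ 2 := by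
        rw [hEuler, qPochhammer_sq_mul_prod_one_sub_pow_odd, hsplit]; ring
  rw [show thetaSum N * B - qPochhammer X N =
      qPochhammer X N * (W + 1) * (W - 1) - (V ^ 2 * qPochhammer (X ^ 2) N - thetaSum N) * B by
    linear_combination hprod]
  exact dvd_sub (hW.mul_left _)
    ((X_pow_succ_dvd_sq_prod_mul_qPochhammer_sub_thetaSum N).mul_right B)

end Polynomial

theorem gauss_identity_coeff_general (n N : ℕ) (hN : n ≤ N) :
    (∏ k ∈ Finset.Icc 1 N, (1 - X ^ k : Polynomial ℤ)).coeff n =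
      ((1 + 2 * ∑ j ∈ Finset.Icc 1 N, (-1 : Polynomial ℤ) ^ j * X ^ (j ^ 2)) *
        ∏ k ∈ Finset.Icc 1 N, (1 + X ^ k)).coeff n := by
  have h := X_pow_dvd_iff.1 (X_pow_succ_dvd_thetaSum_mul_sub_qPochhammer (R := ℤ) N) n (by omega)
  rw [coeff_sub, sub_eq_zero] at h
  exact h.symm

/-- Truncated coefficient form of Gauss's identity
`∏_{k≥1} (1 - x^k)/(1 + x^k) = ∑_{n ∈ ℤ} (-1)^n x^{n²}`: for `1 ≤ n ≤ N`, the
coefficient of `X^n` in `∏_{k=1}^{N} (1 - X^k)` equals the coefficient of `X^n` in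
`(1 + 2 ∑_{j=1}^{N} (-1)^j X^{j²}) · ∏_{k=1}^{N} (1 + X^k)`. -/
theorem gauss_identity_coeff (n N : ℕ) (hn : 1 ≤ n) (hN : n ≤ N) :
    (∏ k ∈ Finset.Icc 1 N, (1 - X ^ k : Polynomial ℤ)).coeff n =
      ((1 + 2 * ∑ j ∈ Finset.Icc 1 N, (-1 : Polynomial ℤ) ^ j * X ^ (j ^ 2)) *
        ∏ k ∈ Finset.Icc 1 N, (1 + X ^ k)).coeff n :=
  gauss_identity_coeff_general n N hN
end
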